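/- arXiv:2105.08277 — 5 statements merged into one kernel-verified Lean document; each statement's English description precedes it below -/
import Mathlib

section
/- For the cycle graph on n vertices (n ≥ 3), the Hosoya index equals the n-th Lucas number L_n, where L_0 = 2, L_1 = 1, and L_n = L_{n-1} + L_{n-2}. -/
/-- The Hosoya index of a simple graph: the number of matchings
(sets of pairwise vertex-disjoint edges), including the empty matching. -/
noncomputable def hosoya {V : Type*} [Fintype V] (G : SimpleGraph V) : ℕ :=
  Nat.card {s : Finset (Sym2 V) // (∀ e ∈ s, e ∈ G.edgeSet) ∧
    (s : Set (Sym2 V)).Pairwise fun e f => ∀ v ∈ e, v ∉ f}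

/-- Lucas numbers: L 0 = 2, L 1 = 1, L (n+2) = L (n+1) + L n. -/
def lucas : ℕ → ℕ
  | 0 => 2
  | 1 => 1
  | n + 2 => lucas (n + 1) + lucas n

/-!
Number the edges of `C_n` by `i ↦ s(i, i + 1)`, `i : Fin n`. Two edges share a vertex exactly when
their indices are cyclically consecutive, so matchings correspond to subsets of `{0, …, n - 1}`
without two consecutive elements that do not contain both `0` and `n - 1`. Splitting on whether
`0` is chosen (the recurrence `i(G) = i(G - v) + i(G - N[v])` for independent sets) leaves two
paths, on `n - 1` and on `n - 3` vertices. A path on `k` vertices has `F (k + 2)` such subsets,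
and `F (n + 1) + F (n - 1) = L n`.
-/

open Finset Nat SimpleGraph

theorem hosoya_eq_card_of_edgeSet_eq_range {V ι : Type*} [Fintype V] {G : SimpleGraph V}
    {e : ι → Sym2 V} (he : Function.Injective e) (hG : G.edgeSet = Set.range e) :
    hosoya G =
      Nat.card {S : Finset ι // (S : Set ι).Pairwise fun i j => ∀ v ∈ e i, v ∉ e j} := by
  classical
  let toMatching
      (S : {S : Finset ι // (S : Set ι).Pairwise fun i j => ∀ v ∈ e i, v ∉ e j}) :
      {M : Finset (Sym2 V) // (∀ x ∈ M, x ∈ G.edgeSet) ∧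
        (M : Set (Sym2 V)).Pairwise fun x y => ∀ v ∈ x, v ∉ y} :=
    ⟨S.1.map ⟨e, he⟩, by simp [hG], by
      rw [coe_map, Function.Embedding.coeFn_mk, he.injOn.pairwise_image]
      exact S.2⟩
  refine (Nat.card_eq_of_bijective toMatching ⟨fun S T hST => ?_, ?_⟩).symm
  · exact Subtype.ext (map_injective _ (congrArg Subtype.val hST))
  · rintro ⟨M, hM, hMP⟩
    have hM_sub : (M : Set (Sym2 V)) ⊆ e '' Set.univ := by
      rw [Set.image_univ, ← hG]
      exact hM
    obtain ⟨S, -, rfl⟩ := subset_set_image_iff.mp hM_sub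
    refine ⟨⟨S, ?_⟩, ?_⟩
    · rwa [coe_image, he.injOn.pairwise_image] at hMP
    · simp [toMatching, map_eq_image]

theorem cycleGraph_edgeSet (n : ℕ) :
    (cycleGraph (n + 2)).edgeSet = Set.range fun i : Fin (n + 2) => s(i, i + 1) := by
  ext e
  induction e using Sym2.ind with
  | _ u v =>
    simp only [mem_edgeSet, cycleGraph_adj, sub_eq_iff_eq_add, Set.mem_range, Sym2.eq_iff]
    constructor
    · rintro (rfl | rfl)
      · exact ⟨v, Or.inr ⟨rfl, add_comm _ _⟩⟩
      · exact ⟨u, Or.inl ⟨rfl, add_comm _ _⟩⟩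
    · rintro ⟨i, ⟨rfl, rfl⟩ | ⟨rfl, rfl⟩⟩
      · exact Or.inr (add_comm _ _)
      · exact Or.inl (add_comm _ _)

theorem injective_sym2_mk_add_one (n : ℕ) :
    Function.Injective fun i : Fin (n + 3) => s(i, i + 1) := by
  intro i j h
  rcases Sym2.eq_iff.mp h with ⟨h, -⟩ | ⟨rfl, hj⟩
  · exact h
  · rw [add_assoc, add_eq_left, Fin.ext_iff, Fin.val_add, Fin.val_one, Fin.val_zero,
      Nat.mod_eq_of_lt (by omega : 1 + 1 < n + 3)] at hj
    omega

theorem pairwise_disjoint_sym2_mk_add_one_iff {n : ℕ} (S : Finset (Fin (n + 2))) :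
    (S : Set (Fin (n + 2))).Pairwise (fun i j => ∀ v ∈ s(i, i + 1), v ∉ s(j, j + 1)) ↔
      ∀ i ∈ S, i + 1 ∉ S := by
  constructor
  · intro h i hi hi1
    refine h hi hi1 ?_ (i + 1) (by simp) (by simp)
    simp
  · intro h i hi j hj hij v hvi hvj
    simp only [Sym2.mem_iff] at hvi hvj
    rcases hvi with rfl | rfl <;> rcases hvj with hv | hv
    · exact hij hv
    · exact h j hj (hv ▸ hi)
    · exact h i hi (hv ▸ hj)
    · exact hij (add_right_cancel hv)

def nonconsecutiveSubsets (s : Finset ℕ) : Finset (Finset ℕ) :=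
  {t ∈ s.powerset | ∀ i ∈ t, i + 1 ∉ t}

theorem mem_nonconsecutiveSubsets {s t : Finset ℕ} :
    t ∈ nonconsecutiveSubsets s ↔ t ⊆ s ∧ ∀ i ∈ t, i + 1 ∉ t := by
  rw [nonconsecutiveSubsets, mem_filter, mem_powerset]

theorem nonconsecutiveSubsets_empty : nonconsecutiveSubsets ∅ = {∅} := by
  ext t
  simp +contextual [mem_nonconsecutiveSubsets]

theorem filter_notMem_nonconsecutiveSubsets (s : Finset ℕ) (c : ℕ) :
    {t ∈ nonconsecutiveSubsets s | c ∉ t} = nonconsecutiveSubsets (s.erase c) := by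
  ext t
  simp only [mem_filter, mem_nonconsecutiveSubsets, subset_erase]
  tauto

-- For `c = 0` the truncated `c - 1` is `c` itself, and only `c + 1` is removed besides `c`.
theorem card_filter_mem_nonconsecutiveSubsets {s : Finset ℕ} {c : ℕ} (hc : c ∈ s) :
    #{t ∈ nonconsecutiveSubsets s | c ∈ t} =
      #(nonconsecutiveSubsets (s \ Icc (c - 1) (c + 1))) := by
  refine card_nbij' (fun t => t.erase c) (insert c) ?_ ?_ ?_ ?_
  · intro t ht
    simp only [coe_filter, Set.mem_ofPred_eq, mem_nonconsecutiveSubsets] at ht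
    obtain ⟨⟨hts, h_nc⟩, hct⟩ := ht
    simp only [mem_coe, mem_nonconsecutiveSubsets, subset_iff, mem_erase, mem_sdiff, mem_Icc]
    refine ⟨fun i ⟨hic, hi⟩ => ⟨hts hi, fun hi_near => ?_⟩, fun i hi hi1 => h_nc i hi.2 hi1.2⟩
    rcases (show i + 1 = c ∨ i = c + 1 by omega) with rfl | rfl
    · exact h_nc i hi hct
    · exact h_nc c hct hi
  · intro u hu
    simp only [mem_coe, mem_nonconsecutiveSubsets, subset_iff, mem_sdiff, mem_Icc] at hu
    obtain ⟨hus, hu⟩ := hu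
    simp only [coe_filter, Set.mem_ofPred_eq, mem_nonconsecutiveSubsets, insert_subset_iff,
      mem_insert]
    refine ⟨⟨⟨hc, fun i hi => (hus hi).1⟩, ?_⟩, Or.inl trivial⟩
    rintro i (rfl | hi) (h | h)
    · omega
    · exact (hus h).2 (by omega)
    · exact (hus hi).2 (by omega)
    · exact hu i hi h
  · intro t ht
    exact insert_erase (mem_filter.mp ht).2
  · intro u hu
    simp only [mem_coe, mem_nonconsecutiveSubsets, subset_iff, mem_sdiff, mem_Icc] at hu
    exact erase_insert fun h => (hu.1 h).2 (by omega)

theorem card_nonconsecutiveSubsets_of_mem {s : Finset ℕ} {c : ℕ} (hc : c ∈ s) :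
    #(nonconsecutiveSubsets s) = #(nonconsecutiveSubsets (s.erase c)) +
      #(nonconsecutiveSubsets (s \ Icc (c - 1) (c + 1))) := by
  rw [← filter_notMem_nonconsecutiveSubsets, ← card_filter_mem_nonconsecutiveSubsets hc,
    add_comm, card_filter_add_card_filter_not]

theorem card_nonconsecutiveSubsets_Ico (a k : ℕ) :
    #(nonconsecutiveSubsets (Ico a (a + k))) = fib (k + 2) := by
  induction k using Nat.twoStepInduction generalizing a with
  | zero => simp [nonconsecutiveSubsets_empty]
  | one =>
    rw [card_nonconsecutiveSubsets_of_mem (c := a) (by simp),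
      show (Ico a (a + 1)).erase a = ∅ by ext; simp,
      show Ico a (a + 1) \ Icc (a - 1) (a + 1) = ∅ by ext; simp; omega,
      nonconsecutiveSubsets_empty]
    rfl
  | more k ih₀ ih₁ =>
    rw [card_nonconsecutiveSubsets_of_mem (c := a) (by simp),
      show (Ico a (a + (k + 2))).erase a = Ico (a + 1) (a + 1 + (k + 1)) by ext; simp; omega,
      show Ico a (a + (k + 2)) \ Icc (a - 1) (a + 1) = Ico (a + 2) (a + 2 + k) by
        ext; simp; omega,
      ih₁, ih₀, fib_add_two (n := k + 2), add_comm]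

theorem Fin.add_one_eq_iff {n : ℕ} {i j : Fin (n + 1)} :
    i + 1 = j ↔ j.val = i.val + 1 ∨ i.val = n ∧ j.val = 0 := by
  rw [Fin.ext_iff, Fin.val_add_one]
  split_ifs with h <;> rw [Fin.ext_iff, Fin.val_last] at h <;> omega

theorem forall_add_one_notMem_iff_map_val {n : ℕ} (S : Finset (Fin (n + 1))) :
    (∀ i ∈ S, i + 1 ∉ S) ↔
      (∀ x ∈ S.map Fin.valEmbedding, x + 1 ∉ S.map Fin.valEmbedding) ∧
      (0 ∈ S.map Fin.valEmbedding → n ∉ S.map Fin.valEmbedding) := by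
  simp only [mem_map, Fin.valEmbedding_apply, not_exists, not_and]
  constructor
  · intro h
    constructor
    · rintro _ ⟨i, hi, rfl⟩ j hj hji
      exact h i hi (Fin.add_one_eq_iff.mpr (Or.inl hji) ▸ hj)
    · rintro ⟨i, hi, hi0⟩ j hj hjn
      exact h j hj (Fin.add_one_eq_iff.mpr (Or.inr ⟨hjn, hi0⟩) ▸ hi)
  · rintro ⟨hpath, hwrap⟩ i hi hi1
    rcases Fin.add_one_eq_iff.mp (rfl : i + 1 = i + 1) with h | ⟨hin, h0⟩
    · exact hpath _ ⟨i, hi, rfl⟩ _ hi1 h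
    · exact hwrap ⟨_, hi1, h0⟩ i hi hin

theorem card_finset_fin_forall_add_one_notMem (n : ℕ) :
    Nat.card {S : Finset (Fin (n + 1)) // ∀ i ∈ S, i + 1 ∉ S} =
      #{t ∈ nonconsecutiveSubsets (range (n + 1)) | 0 ∈ t → n ∉ t} := by
  have h_univ : (univ : Finset (Fin (n + 1))).map Fin.valEmbedding = range (n + 1) := by
    rw [Fin.map_valEmbedding_univ, Nat.Iio_eq_range]
  rw [Nat.card_eq_fintype_card, Fintype.card_subtype]
  refine card_bij (fun S _ => S.map Fin.valEmbedding) (fun S hS => ?_)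
    (fun S _ T _ h => map_injective _ h) (fun t ht => ?_)
  · rw [mem_filter, forall_add_one_notMem_iff_map_val] at hS
    rw [mem_filter, mem_nonconsecutiveSubsets, ← h_univ]
    exact ⟨⟨map_subset_map.mpr (subset_univ S), hS.2.1⟩, hS.2.2⟩
  · rw [mem_filter, mem_nonconsecutiveSubsets, ← h_univ, subset_map_iff] at ht
    obtain ⟨⟨⟨S, -, rfl⟩, h_path⟩, h_wrap⟩ := ht
    refine ⟨S, ?_, rfl⟩
    rw [mem_filter, forall_add_one_notMem_iff_map_val]
    exact ⟨mem_univ S, h_path, h_wrap⟩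

theorem lucas_add_one_eq_fib_add_fib : ∀ n, lucas (n + 1) = fib (n + 2) + fib n
  | 0 => rfl
  | 1 => rfl
  | n + 2 => by
    rw [lucas, lucas_add_one_eq_fib_add_fib (n + 1), lucas_add_one_eq_fib_add_fib n]
    simp only [fib_add_two]
    ring

theorem card_filter_nonconsecutiveSubsets_range (k : ℕ) :
    #{t ∈ nonconsecutiveSubsets (range (k + 3)) | 0 ∈ t → k + 2 ∉ t} = lucas (k + 3) := by
  set C := {t ∈ nonconsecutiveSubsets (range (k + 3)) | 0 ∈ t → k + 2 ∉ t}
  have h_zero_mem :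
      {t ∈ C | 0 ∈ t} = {t ∈ nonconsecutiveSubsets (range (k + 2)) | 0 ∈ t} := by
    rw [show range (k + 2) = (range (k + 3)).erase (k + 2) by ext; simp; omega,
      ← filter_notMem_nonconsecutiveSubsets]
    ext t
    simp only [C, mem_filter]
    tauto
  have h_zero_not_mem : {t ∈ C | 0 ∉ t} = nonconsecutiveSubsets (Ico 1 (1 + (k + 2))) := by
    rw [show Ico 1 (1 + (k + 2)) = (range (k + 3)).erase 0 by ext; simp; omega,
      ← filter_notMem_nonconsecutiveSubsets]
    ext t
    simp only [C, mem_filter]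
    tauto
  rw [← card_filter_add_card_filter_not (s := C) (0 ∈ ·), h_zero_mem, h_zero_not_mem,
    card_filter_mem_nonconsecutiveSubsets (by simp),
    show range (k + 2) \ Icc (0 - 1) (0 + 1) = Ico 2 (2 + k) by ext; simp; omega,
    card_nonconsecutiveSubsets_Ico, card_nonconsecutiveSubsets_Ico, lucas_add_one_eq_fib_add_fib,
    add_comm]

theorem hosoya_cycleGraph (n : ℕ) (hn : 3 ≤ n) :
    hosoya (SimpleGraph.cycleGraph n) = lucas n := by
  obtain ⟨k, rfl⟩ : ∃ k, n = k + 3 := ⟨n - 3, by omega⟩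
  rw [hosoya_eq_card_of_edgeSet_eq_range (injective_sym2_mk_add_one k)
    (cycleGraph_edgeSet (k + 1))]
  simp_rw [pairwise_disjoint_sym2_mk_add_one_iff]
  rw [card_finset_fin_forall_add_one_notMem (k + 2), card_filter_nonconsecutiveSubsets_range]
end

section
/- Let f_n be defined by f_0 = 1, f_1 = m+1, and f_n = (m+1) f_{n-1} + r f_{n-2} if n is even, f_n = (m+1) f_{n-1} + s f_{n-2} if n is odd, where m ≥ 0 and r, s ≥ 1 are integers. Then the even-indexed subsequence satisfies f_{2n} = M f_{2n-2} - r s f_{2n-4} for all n ≥ 2, where M = (m+1)^2 + r + s. -/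
/-- The odd terms drop out because the even step gives `a f(2k+1) = f(2k+2) - r f(2k)`. -/
theorem even_step_of_alternating_recurrence {R : Type*} [CommRing R] {a r s : R} {f : ℕ → R}
    (h_even : ∀ k, f (2 * k + 2) = a * f (2 * k + 1) + r * f (2 * k))
    (h_odd : ∀ k, f (2 * k + 3) = a * f (2 * k + 2) + s * f (2 * k + 1)) (k : ℕ) :
    f (2 * k + 4) = (a ^ 2 + r + s) * f (2 * k + 2) - r * s * f (2 * k) := by
  have h_next : f (2 * k + 4) = a * f (2 * k + 3) + r * f (2 * k + 2) := h_even (k + 1)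
  linear_combination h_next + a * h_odd k - s * h_even k

theorem even_subseq_recurrence_general (m r s : ℤ)
    (f : ℕ → ℤ)
    (hf : ∀ n, 2 ≤ n →
      f n = (m + 1) * f (n - 1) + (if Even n then r else s) * f (n - 2)) :
    ∀ n, 2 ≤ n →
      f (2 * n) = ((m + 1) ^ 2 + r + s) * f (2 * n - 2) - r * s * f (2 * n - 4) := by
  have h_even (k : ℕ) : f (2 * k + 2) = (m + 1) * f (2 * k + 1) + r * f (2 * k) := by
    simpa [Nat.even_add_one] using hf (2 * k + 2) (by omega)
  have h_odd (k : ℕ) : f (2 * k + 3) = (m + 1) * f (2 * k + 2) + s * f (2 * k + 1) := by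
    simpa [Nat.even_add_one] using hf (2 * k + 3) (by omega)
  intro n hn
  obtain ⟨k, rfl⟩ : ∃ k, n = k + 2 := ⟨n - 2, by omega⟩
  rw [show 2 * (k + 2) = 2 * k + 4 by ring, Nat.add_sub_cancel]
  exact even_step_of_alternating_recurrence h_even h_odd k

/-- The even-indexed subsequence of the alternating three-term recurrence
satisfies `f (2n) = M f (2n-2) - r s f (2n-4)` with `M = (m+1)^2 + r + s`. -/
theorem even_subseq_recurrence (m r s : ℤ) (hm : 0 ≤ m) (hr : 1 ≤ r) (hs : 1 ≤ s)
    (f : ℕ → ℤ) (hf0 : f 0 = 1) (hf1 : f 1 = m + 1)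
    (hf : ∀ n, 2 ≤ n →
      f n = (m + 1) * f (n - 1) + (if Even n then r else s) * f (n - 2)) :
    ∀ n, 2 ≤ n →
      f (2 * n) = ((m + 1) ^ 2 + r + s) * f (2 * n - 2) - r * s * f (2 * n - 4) :=
  even_subseq_recurrence_general m r s f hf
end

section
/- Let M, r, s be positive integers with M > 2rs. Then for n ≥ 2, the negative continued fraction M − rs/(M − rs/(... − rs/(M − M/2))) with n levels equals the regular-type continued fraction (M−1) + 1/(1 + rs/((M−rs−1) + 1/(1 + rs/((M−rs−1) + ... + 1/(1 + 2rs/(M−2rs)))))), where the pattern 1/(1 + rs/(M−rs−1 + ...)) repeats and the final partial quotient is 2rs/(M−2rs); i.e., both expressions define the same rational number u_n/u_{n-1} for the Lucas-type sequence u_0 = 2, u_1 = M, u_n = M u_{n-1} − rs u_{n-2}. -/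
/-!
Clearing denominators, `u (k + 2) / u (k + 1) = M - c / (u (k + 1) / u k)` is the recurrence
itself, so the negative continued fraction computes `u n / u (n - 1)`. For the regular one, set
`v k = u (k + 1) - c * u k`; the recurrence becomes `v (k + 1) = (M - c - 1) * u (k + 1) + v k`,
which says that `u (k + 1) / v k` obeys the recursion `e (k + 1) = 1 + c / ((M - c - 1) + 1 / e k)`,
and `(M - 1) + v k / u (k + 1) = u (k + 2) / u (k + 1)`. When `0 ≤ c` and `c + 1 ≤ M` the same
identity shows inductively that all `u k` and `v k` are positive, so no denominator vanishes.
-/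

section LucasRecurrence

variable {K : Type*} [Field K] {M c : K} {u : ℕ → K}

theorem lucas_pos_and_mul_lt_succ [LinearOrder K] [IsStrictOrderedRing K]
    (hc : 0 ≤ c) (hcM : c + 1 ≤ M) (h0 : 0 < u 0) (h1 : c * u 0 < u 1)
    (hu : ∀ k, u (k + 2) = M * u (k + 1) - c * u k) :
    ∀ k, 0 < u k ∧ c * u k < u (k + 1) := by
  intro k
  induction k with
  | zero => exact ⟨h0, h1⟩
  | succ k ih =>
    obtain ⟨hk, hgap⟩ := ih
    have hk1 : 0 < u (k + 1) := lt_of_le_of_lt (mul_nonneg hc hk.le) hgap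
    refine ⟨hk1, ?_⟩
    rw [hu k]
    nlinarith

theorem negative_cf_eq_lucas_ratio (hne : ∀ k, u k ≠ 0)
    (hu : ∀ k, u (k + 2) = M * u (k + 1) - c * u k)
    {t : ℕ → K} (ht1 : t 1 = u 1 / u 0) (ht : ∀ k, t (k + 2) = M - c / t (k + 1)) :
    ∀ n, t (n + 1) = u (n + 1) / u n := by
  intro n
  induction n with
  | zero => exact ht1
  | succ n ih =>
    have := hne n
    have := hne (n + 1)
    rw [ht n, ih, hu n]
    field_simp

theorem regular_cf_eq_lucas_ratio (hne : ∀ k, u k ≠ 0) (hne' : ∀ k, u (k + 1) - c * u k ≠ 0)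
    (hu : ∀ k, u (k + 2) = M * u (k + 1) - c * u k)
    {e : ℕ → K} (he1 : e 1 = u 1 / (u 1 - c * u 0))
    (he : ∀ k, e (k + 2) = 1 + c / ((M - c - 1) + 1 / e (k + 1))) :
    ∀ n, e (n + 1) = u (n + 1) / (u (n + 1) - c * u n) := by
  intro n
  induction n with
  | zero => exact he1
  | succ n ih =>
    have hv : (M - c - 1) + 1 / e (n + 1) = (u (n + 2) - c * u (n + 1)) / u (n + 1) := by
      have := hne (n + 1)
      rw [ih, one_div_div, hu n]
      field_simp
      ring
    have := hne' (n + 1)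
    rw [he n, hv, div_div_eq_mul_div]
    field_simp
    ring

end LucasRecurrence

theorem negative_cf_eq_regular_cf_general (M r s : ℕ)
    (hMrs : 2 * r * s < M)
    (u : ℕ → ℚ) (hu0 : u 0 = 2) (hu1 : u 1 = (M : ℚ))
    (hu : ∀ k, 2 ≤ k → u k = (M : ℚ) * u (k - 1) - (r : ℚ) * s * u (k - 2))
    (t : ℕ → ℚ) (ht1 : t 1 = (M : ℚ) - (M : ℚ) / 2)
    (ht : ∀ k, 1 ≤ k → t (k + 1) = (M : ℚ) - (r : ℚ) * s / t k)
    (e : ℕ → ℚ) (he1 : e 1 = 1 + 2 * (r : ℚ) * s / ((M : ℚ) - 2 * r * s))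
    (he : ∀ k, 1 ≤ k →
      e (k + 1) = 1 + (r : ℚ) * s / (((M : ℚ) - (r : ℚ) * s - 1) + 1 / e k)) :
    ∀ n, 2 ≤ n →
      t n = u n / u (n - 1) ∧
      ((M : ℚ) - 1) + 1 / e (n - 1) = u n / u (n - 1) := by
  have hMrsQ : 2 * ((r : ℚ) * s) < M := by rw [← mul_assoc]; exact_mod_cast hMrs
  have hcM : (r : ℚ) * s + 1 ≤ M := by exact_mod_cast (show r * s + 1 ≤ M by nlinarith)
  have hu' (k : ℕ) : u (k + 2) = M * u (k + 1) - r * s * u k := hu (k + 2) (by omega)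
  have hgap := lucas_pos_and_mul_lt_succ (by positivity) hcM (by rw [hu0]; norm_num)
    (by rw [hu0, hu1]; linarith) hu'
  have hne (k : ℕ) : u k ≠ 0 := (hgap k).1.ne'
  have hne' (k : ℕ) : u (k + 1) - r * s * u k ≠ 0 := (sub_pos.2 (hgap k).2).ne'
  have htu := negative_cf_eq_lucas_ratio hne hu' (by rw [ht1, hu1, hu0]; ring)
    (fun k => ht (k + 1) (by omega))
  have heu := regular_cf_eq_lucas_ratio hne hne' hu'
    (by
      have hd : (M : ℚ) - 2 * r * s ≠ 0 := by rw [mul_assoc]; exact (sub_pos.2 hMrsQ).ne'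
      rw [he1, hu1, hu0, show (M : ℚ) - r * s * 2 = M - 2 * r * s by ring]
      field_simp
      ring)
    (fun k => he (k + 1) (by omega))
  rintro n hn
  obtain ⟨p, rfl⟩ : ∃ p, n = p + 2 := ⟨n - 2, by omega⟩
  refine ⟨htu (p + 1), ?_⟩
  have := hne (p + 1)
  rw [show p + 2 - 1 = p + 1 from rfl, heu p, one_div_div, hu' p]
  field_simp
  ring

/-- For positive integers `M, r, s` with `M > 2rs`, the `n`-level negative
continued fraction `M - rs/(M - rs/(⋯ - rs/(M - M/2)))` and the regular-type
continued fraction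
`(M-1) + 1/(1 + rs/((M-rs-1) + 1/(1 + rs/(⋯ + 1/(1 + 2rs/(M-2rs))))))`
both equal `u n / u (n-1)` for the Lucas-type sequence `u 0 = 2`, `u 1 = M`,
`u n = M u (n-1) - rs u (n-2)`. -/
theorem negative_cf_eq_regular_cf (M r s : ℕ) (hM : 0 < M) (hr : 0 < r) (hs : 0 < s)
    (hMrs : 2 * r * s < M)
    (u : ℕ → ℚ) (hu0 : u 0 = 2) (hu1 : u 1 = (M : ℚ))
    (hu : ∀ k, 2 ≤ k → u k = (M : ℚ) * u (k - 1) - (r : ℚ) * s * u (k - 2))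
    (t : ℕ → ℚ) (ht1 : t 1 = (M : ℚ) - (M : ℚ) / 2)
    (ht : ∀ k, 1 ≤ k → t (k + 1) = (M : ℚ) - (r : ℚ) * s / t k)
    (e : ℕ → ℚ) (he1 : e 1 = 1 + 2 * (r : ℚ) * s / ((M : ℚ) - 2 * r * s))
    (he : ∀ k, 1 ≤ k →
      e (k + 1) = 1 + (r : ℚ) * s / (((M : ℚ) - (r : ℚ) * s - 1) + 1 / e k)) :
    ∀ n, 2 ≤ n →
      t n = u n / u (n - 1) ∧
      ((M : ℚ) - 1) + 1 / e (n - 1) = u n / u (n - 1) :=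
  negative_cf_eq_regular_cf_general M r s hMrs u hu0 hu1 hu t ht1 ht e he1 he
end

section
/- The Hosoya index of the caterpillar-bond graph D_{n}(a_0, a_1, ..., a_{n-1}; b_1, ..., b_{n-1}) equals p_{n-1}, the numerator of the generalized continued fraction a_0 + b_1/(a_1 + b_2/(a_2 + ... + b_{n-1}/a_{n-1})), where p_k satisfies p_k = a_k p_{k-1} + b_k p_{k-2} with p_0 = a_0, p_1 = a_0 a_1 + b_1. -/
/-- The Hosoya index of a multigraph with edge set `E` and endpoint map `ends`:
the number of matchings (finite sets of pairwise vertex-disjoint non-loop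
edges, with parallel edges counted as distinct), including the empty one. -/
noncomputable def hosoyaM {V E : Type*} (ends : E → Sym2 V) : ℕ :=
  Nat.card {s : Finset E // (∀ e ∈ s, ¬ (ends e).IsDiag) ∧
    (s : Set E).Pairwise fun e f => ∀ v ∈ ends e, v ∉ ends f}

/-- Vertices of the caterpillar-bond graph D_n(a_0,…,a_{n-1}; b_1,…,b_{n-1}):
the n spine vertices together with a_i - 1 pendant leaves at spine vertex i. -/
def DVert (n : ℕ) (a : ℕ → ℕ) : Type :=
  Fin n ⊕ Σ i : Fin n, Fin (a i - 1)

/-- Edges of the caterpillar-bond graph: b_{i+1} parallel edges between spine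
vertices i and i+1, and one pendant edge for each leaf. -/
def DEdge (n : ℕ) (a b : ℕ → ℕ) : Type :=
  (Σ i : Fin (n - 1), Fin (b (i + 1))) ⊕ Σ i : Fin n, Fin (a i - 1)

/-- The endpoint map of the caterpillar-bond graph D_n(a;b). -/
def Dends (n : ℕ) (a b : ℕ → ℕ) : DEdge n a b → Sym2 (DVert n a)
  | .inl ⟨i, _⟩ =>
      s(Sum.inl ⟨i.1, by omega⟩, Sum.inl ⟨i.1 + 1, by omega⟩)
  | .inr ⟨i, j⟩ => s(Sum.inl i, Sum.inr ⟨i, j⟩)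


section ModelSec
variable (a b : ℕ → ℕ)

def Model (n : ℕ) : Type :=
  {fg : (∀ _i : ℕ, Option (Fin (b (_i+1)))) × (∀ i : ℕ, Option (Fin (a i - 1))) //
    (∀ i, n - 1 ≤ i → fg.1 i = none) ∧ (∀ i, n ≤ i → fg.2 i = none) ∧
    (∀ i, (fg.1 i).isSome → fg.2 i = none ∧ fg.2 (i+1) = none) ∧
    (∀ i, ¬((fg.1 i).isSome ∧ (fg.1 (i+1)).isSome))}

def stepTo (n : ℕ) (x : Model a b (n+2)) :
    (Model a b (n+1) × Option (Fin (a (n+1) - 1))) ⊕ (Model a b n × Fin (b (n+1))) :=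
  match hfn : x.1.1 n with
  | none => .inl (⟨(x.1.1, Function.update x.1.2 (n+1) none), by
      obtain ⟨⟨f, g⟩, hf, hg, h1, h2⟩ := x
      dsimp only at hfn hf hg h1 h2 ⊢
      refine ⟨fun i hi => ?_, fun i hi => ?_, fun i hi => ?_, h2⟩
      · rcases eq_or_lt_of_le hi with h | h
        · rw [← h]; exact hfn
        · exact hf i (by omega)
      · by_cases hin : i = n + 1
        · rw [hin, Function.update_self]
        · rw [Function.update_of_ne hin]; exact hg i (by omega)
      · have hilt : i < n := by
          by_contra hge
          have hnone : f i = none := by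
            rcases Nat.lt_or_ge i (n+1) with h | h
            · have he : i = n := by omega
              rw [he]; exact hfn
            · exact hf i (by omega)
          rw [hnone] at hi; simp at hi
        obtain ⟨e1, e2⟩ := h1 i hi
        rw [Function.update_of_ne (show i ≠ n + 1 by omega),
          Function.update_of_ne (show i + 1 ≠ n + 1 by omega)]
        exact ⟨e1, e2⟩⟩, x.1.2 (n+1))
  | some k => .inr (⟨(Function.update x.1.1 n none, x.1.2), by
      obtain ⟨⟨f, g⟩, hf, hg, h1, h2⟩ := x
      dsimp only at hfn hf hg h1 h2 ⊢
      have hfs : (f n).isSome := by rw [hfn]; rfl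
      refine ⟨fun i hi => ?_, fun i hi => ?_, fun i hi => ?_, fun i hi => ?_⟩
      · by_cases hin : i = n
        · rw [hin, Function.update_self]
        · rw [Function.update_of_ne hin]
          rcases Nat.lt_or_ge i (n+1) with h | h
          · have hn1 : i + 1 = n := by omega
            exact Option.not_isSome_iff_eq_none.mp
              (fun hs => h2 i ⟨hs, by rw [hn1]; exact hfs⟩)
          · exact hf i (by omega)
      · rcases Nat.lt_or_ge i (n+2) with h | h
        · have : i = n ∨ i = n + 1 := by omega
          rcases this with h' | h' <;> rw [h']
          · exact (h1 n hfs).1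
          · exact (h1 n hfs).2
        · exact hg i (by omega)
      · by_cases hin : i = n
        · rw [hin, Function.update_self] at hi; simp at hi
        · rw [Function.update_of_ne hin] at hi; exact h1 i hi
      · obtain ⟨hi1, hi2⟩ := hi
        by_cases hin : i = n
        · rw [hin, Function.update_self] at hi1; simp at hi1
        · rw [Function.update_of_ne hin] at hi1
          by_cases hin2 : i + 1 = n
          · rw [hin2, Function.update_self] at hi2; simp at hi2
          · rw [Function.update_of_ne hin2] at hi2; exact h2 i ⟨hi1, hi2⟩⟩, k)

def stepInv (n : ℕ) (y : (Model a b (n+1) × Option (Fin (a (n+1) - 1))) ⊕ (Model a b n × Fin (b (n+1)))) :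
    Model a b (n+2) :=
  match y with
  | .inl (m, o) => ⟨(m.1.1, Function.update m.1.2 (n+1) o), by
      obtain ⟨⟨f, g⟩, hf, hg, h1, h2⟩ := m
      dsimp only at hf hg h1 h2 ⊢
      refine ⟨fun i hi => hf i (by omega), fun i hi => ?_, fun i hi => ?_, h2⟩
      · rw [Function.update_of_ne (show i ≠ n + 1 by omega)]; exact hg i (by omega)
      · have hilt : i < n := by
          by_contra hge
          have hnone : f i = none := hf i (by omega)
          rw [hnone] at hi; simp at hi
        obtain ⟨e1, e2⟩ := h1 i hi
        rw [Function.update_of_ne (show i ≠ n + 1 by omega),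
          Function.update_of_ne (show i + 1 ≠ n + 1 by omega)]
        exact ⟨e1, e2⟩⟩
  | .inr (m, k) => ⟨(Function.update m.1.1 n (some k), m.1.2), by
      obtain ⟨⟨f, g⟩, hf, hg, h1, h2⟩ := m
      dsimp only at hf hg h1 h2 ⊢
      refine ⟨fun i hi => ?_, fun i hi => hg i (by omega), fun i hi => ?_, fun i hi => ?_⟩
      · rw [Function.update_of_ne (show i ≠ n by omega)]; exact hf i (by omega)
      · by_cases hin : i = n
        · rw [hin]; exact ⟨hg n le_rfl, hg (n+1) (by omega)⟩
        · rw [Function.update_of_ne hin] at hi; exact h1 i hi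
      · obtain ⟨hi1, hi2⟩ := hi
        by_cases hin : i = n
        · rw [hin, Function.update_of_ne (show n + 1 ≠ n by omega), hf (n+1) (by omega)] at hi2
          simp at hi2
        · rw [Function.update_of_ne hin] at hi1
          by_cases hin2 : i + 1 = n
          · rw [show i = n - 1 by omega, hf (n-1) le_rfl] at hi1
            simp at hi1
          · rw [Function.update_of_ne hin2] at hi2
            exact h2 i ⟨hi1, hi2⟩⟩

def modelStepEquiv (n : ℕ) :
    Model a b (n+2) ≃ (Model a b (n+1) × Option (Fin (a (n+1) - 1))) ⊕ (Model a b n × Fin (b (n+1))) where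
  toFun := stepTo a b n
  invFun := stepInv a b n
  left_inv x := by
    unfold stepTo
    split
    case _ heq =>
      apply Subtype.ext
      rw [Prod.ext_iff]
      refine ⟨rfl, ?_⟩
      show Function.update (Function.update x.1.2 (n+1) none) (n+1) (x.1.2 (n+1)) = x.1.2
      rw [Function.update_idem, Function.update_eq_self]
    case _ k heq =>
      apply Subtype.ext
      rw [Prod.ext_iff]
      refine ⟨?_, rfl⟩
      show Function.update (Function.update x.1.1 n none) n (some k) = x.1.1
      rw [Function.update_idem, ← heq, Function.update_eq_self]
  right_inv y := by
    match y with
    | .inl (m, o) =>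
      have hfn : m.1.1 n = none := m.2.1 n (by omega)
      have hgn : m.1.2 (n+1) = none := m.2.2.1 (n+1) le_rfl
      show stepTo a b n (stepInv a b n (.inl (m, o))) = _
      unfold stepInv stepTo
      split
      case _ heq =>
        congr 1
        apply Prod.ext
        · apply Subtype.ext
          rw [Prod.ext_iff]
          refine ⟨rfl, ?_⟩
          show Function.update (Function.update m.1.2 (n+1) o) (n+1) none = m.1.2
          rw [Function.update_idem, ← hgn, Function.update_eq_self]
        · show Function.update m.1.2 (n+1) o (n+1) = o
          rw [Function.update_self]
      case _ k heq =>
        replace heq : m.1.1 n = some k := heq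
        rw [hfn] at heq
        simp at heq
    | .inr (m, k) =>
      have hfn : m.1.1 n = none := m.2.1 n (by omega)
      show stepTo a b n (stepInv a b n (.inr (m, k))) = _
      unfold stepInv stepTo
      split
      case _ heq =>
        replace heq : Function.update m.1.1 n (some k) n = none := heq
        rw [Function.update_self] at heq
        simp at heq
      case _ k' heq =>
        replace heq : Function.update m.1.1 n (some k) n = some k' := heq
        rw [Function.update_self] at heq
        have hk : k = k' := by simpa using heq
        subst hk
        congr 1
        apply Prod.ext
        · apply Subtype.ext
          rw [Prod.ext_iff]
          refine ⟨?_, rfl⟩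
          show Function.update (Function.update m.1.1 n (some k)) n none = m.1.1
          rw [Function.update_idem, ← hfn, Function.update_eq_self]
        · rfl

instance modelFinite (n : ℕ) : Finite (Model a b n) := by
  have : Function.Injective (fun x : Model a b n =>
      ((fun i : Fin n => x.1.1 i, fun i : Fin n => x.1.2 i) :
        (∀ i : Fin n, Option (Fin (b (i+1)))) × (∀ i : Fin n, Option (Fin (a i - 1))))) := by
    intro x y h
    have h1 := congrArg Prod.fst h
    have h2 := congrArg Prod.snd h
    apply Subtype.ext
    rw [Prod.ext_iff]
    constructor
    · funext i
      by_cases hi : i < n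
      · exact congrFun h1 ⟨i, hi⟩
      · rw [x.2.1 i (by omega), y.2.1 i (by omega)]
    · funext i
      by_cases hi : i < n
      · exact congrFun h2 ⟨i, hi⟩
      · rw [x.2.2.1 i (by omega), y.2.2.1 i (by omega)]
  exact Finite.of_injective _ this

def model0Equiv : Model a b 0 ≃ Unit where
  toFun _ := ()
  invFun _ := ⟨(fun _ => none, fun _ => none), by simp⟩
  left_inv := by
    rintro ⟨⟨f, g⟩, hf, hg, -⟩
    apply Subtype.ext
    rw [Prod.ext_iff]
    constructor
    · funext i; exact (hf i (by omega)).symm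
    · funext i; exact (hg i (by omega)).symm
  right_inv _ := rfl

def model1Equiv : Model a b 1 ≃ Option (Fin (a 0 - 1)) where
  toFun x := x.1.2 0
  invFun o := ⟨(fun _ => none, Function.update (fun _ => none) 0 o), by
    refine ⟨fun i _ => rfl, fun i hi => ?_, fun i hi => by simp at hi, fun i hi => by simp at hi⟩
    show Function.update (fun j : ℕ => (none : Option (Fin (a j - 1)))) 0 o i = none
    rw [Function.update_of_ne (show i ≠ 0 by omega)]⟩
  left_inv := by
    rintro ⟨⟨f, g⟩, hf, hg, -⟩
    apply Subtype.ext
    rw [Prod.ext_iff]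
    constructor
    · funext i; exact (hf i (by omega)).symm
    · funext i
      rcases Nat.eq_zero_or_pos i with h | h
      · subst h; simp
      · show Function.update (fun j : ℕ => (none : Option (Fin (a j - 1)))) 0 (g 0) i = g i
        rw [Function.update_of_ne (show i ≠ 0 by omega)]
        exact (hg i (by omega)).symm
  right_inv o := by simp


lemma card_model0 : Nat.card (Model a b 0) = 1 := by
  rw [Nat.card_congr (model0Equiv a b)]; simp

lemma card_model1 (ha : 1 ≤ a 0) : Nat.card (Model a b 1) = a 0 := by
  rw [Nat.card_congr (model1Equiv a b), Nat.card_eq_fintype_card]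
  simp [Fintype.card_option]
  omega

lemma card_step (n : ℕ) (ha : 1 ≤ a (n+1)) :
    Nat.card (Model a b (n+2)) =
      a (n+1) * Nat.card (Model a b (n+1)) + b (n+1) * Nat.card (Model a b n) := by
  rw [Nat.card_congr (modelStepEquiv a b n), Nat.card_sum, Nat.card_prod, Nat.card_prod]
  rw [Nat.card_eq_fintype_card (α := Option (Fin (a (n+1) - 1))),
    Nat.card_eq_fintype_card (α := Fin (b (n+1)))]
  simp [Fintype.card_option]
  rw [Nat.sub_add_cancel ha]
  ring

lemma card_model_succ (ha : ∀ i, 1 ≤ a i) (p : ℕ → ℕ) (hp0 : p 0 = a 0)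
    (hp1 : p 1 = a 0 * a 1 + b 1)
    (hp : ∀ k, p (k + 2) = a (k + 2) * p (k + 1) + b (k + 2) * p k) :
    ∀ n, Nat.card (Model a b (n+1)) = p n := by
  intro n
  induction n using Nat.twoStepInduction with
  | zero => rw [card_model1 a b (ha 0), hp0]
  | one =>
    rw [card_step a b 0 (ha 1), card_model1 a b (ha 0), card_model0, hp1]
    ring
  | more n ih1 ih2 =>
    rw [card_step a b (n+1) (ha (n+2)), ih1, ih2, hp n]

end ModelSec

section GraphSec
variable (n : ℕ) (a b : ℕ → ℕ)

instance : DecidableEq (DVert n a) := by unfold DVert; infer_instance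
instance : Fintype (DEdge n a b) := by unfold DEdge; infer_instance
instance : DecidableEq (DEdge n a b) := by unfold DEdge; infer_instance

variable {n a b}

def psiMem (f : ∀ i : ℕ, Option (Fin (b (i+1)))) (g : ∀ i : ℕ, Option (Fin (a i - 1))) :
    DEdge n a b → Prop
  | .inl ⟨i, j⟩ => f i = some j
  | .inr ⟨i, j⟩ => g i = some j

instance (f : ∀ i : ℕ, Option (Fin (b (i+1)))) (g : ∀ i : ℕ, Option (Fin (a i - 1))) :
    DecidablePred (psiMem (n := n) f g) := fun e =>
  match e with
  | .inl ⟨i, j⟩ => (inferInstance : Decidable (f ↑i = some j))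
  | .inr ⟨i, j⟩ => (inferInstance : Decidable (g ↑i = some j))

def Psi (x : Model a b n) : Finset (DEdge n a b) :=
  Finset.univ.filter (psiMem x.1.1 x.1.2)

lemma mem_Psi {x : Model a b n} {e : DEdge n a b} : e ∈ Psi x ↔ psiMem x.1.1 x.1.2 e := by
  simp [Psi]

def IsM (s : Finset (DEdge n a b)) : Prop :=
  (∀ e ∈ s, ¬ (Dends n a b e).IsDiag) ∧
    (s : Set (DEdge n a b)).Pairwise fun e f => ∀ v ∈ Dends n a b e, v ∉ Dends n a b f

lemma not_share {s : Finset (DEdge n a b)} (hs : IsM s) {e e' : DEdge n a b}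
    (he : e ∈ s) (he' : e' ∈ s) (hne : e ≠ e') (v : DVert n a)
    (h1 : v ∈ Dends n a b e) (h2 : v ∈ Dends n a b e') : False :=
  hs.2 (Finset.mem_coe.mpr he) (Finset.mem_coe.mpr he') hne v h1 h2

lemma dvert_inl_inj {n : ℕ} {a : ℕ → ℕ} {x y : Fin n} :
    @Eq (DVert n a) (Sum.inl x) (Sum.inl y) ↔ x = y :=
  ⟨fun h => by injection h, fun h => by rw [h]⟩
lemma dvert_inl_ne_inr {n : ℕ} {a : ℕ → ℕ} {x : Fin n} {y : Σ i : Fin n, Fin (a i - 1)} :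
    @Eq (DVert n a) (Sum.inl x) (Sum.inr y) ↔ False :=
  ⟨fun h => by injection h, False.elim⟩
lemma dvert_inr_ne_inl {n : ℕ} {a : ℕ → ℕ} {x : Fin n} {y : Σ i : Fin n, Fin (a i - 1)} :
    @Eq (DVert n a) (Sum.inr y) (Sum.inl x) ↔ False :=
  ⟨fun h => by injection h, False.elim⟩
lemma dvert_inr_inj {n : ℕ} {a : ℕ → ℕ} {y y' : Σ i : Fin n, Fin (a i - 1)} :
    @Eq (DVert n a) (Sum.inr y) (Sum.inr y') ↔ y = y' :=
  ⟨fun h => by injection h, fun h => by rw [h]⟩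

lemma psi_isM (x : Model a b n) : IsM (Psi x) := by
  obtain ⟨⟨f, g⟩, hf, hg, h1, h2⟩ := x
  constructor
  · rintro (⟨i, j⟩ | ⟨i, j⟩) he
    · simp only [Dends, Sym2.mk_isDiag_iff, dvert_inl_inj, Fin.mk.injEq]
      exact fun h => absurd (Sym2.mk_isDiag_iff.mp h) (fun h' => by injection h' with h''; simp at h'')
    · simp [Dends, Sym2.mk_isDiag_iff, dvert_inl_ne_inr]; exact fun h => dvert_inl_ne_inr.mp (Sym2.mk_isDiag_iff.mp h)
  · rintro (⟨i, j⟩ | ⟨i, j⟩) he (⟨i', j'⟩ | ⟨i', j'⟩) he' hne v hv hv' <;>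
      (replace he := mem_Psi.mp (Finset.mem_coe.mp he); replace he' := mem_Psi.mp (Finset.mem_coe.mp he')) <;>
      simp only [psiMem] at he he' <;>
      (simp only [Dends] at hv hv'; replace hv := Sym2.mem_iff.mp hv; replace hv' := Sym2.mem_iff.mp hv')
    · -- bond-bond
      have hii : (i : ℕ) ≠ (i' : ℕ) := by
        intro hval
        have : i = i' := Fin.ext hval
        subst this
        rw [he] at he'
        exact hne (by rw [Option.some_inj.mp he'])
      have hne1 : (i' : ℕ) ≠ (i : ℕ) + 1 := by
        intro hval
        exact h2 i ⟨by simp [he], by rw [← hval]; simp [he']⟩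
      have hne2 : (i : ℕ) ≠ (i' : ℕ) + 1 := by
        intro hval
        exact h2 i' ⟨by simp [he'], by rw [← hval]; simp [he]⟩
      rcases hv with rfl | rfl <;> rcases hv' with h | h <;>
        simp only [dvert_inl_inj, Fin.mk.injEq] at h <;> omega
    · -- bond-pendant
      have hgi := h1 i (by simp [he])
      have hne1 : (i' : ℕ) ≠ (i : ℕ) := by
        intro hval
        have hnone : g ↑i' = none := by rw [hval]; exact hgi.1
        rw [hnone] at he'
        cases he'
      have hne2 : (i' : ℕ) ≠ (i : ℕ) + 1 := by
        intro hval
        have hnone : g ↑i' = none := by rw [hval]; exact hgi.2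
        rw [hnone] at he'
        cases he'
      rcases hv with rfl | rfl <;> rcases hv' with h | h <;>
        simp only [dvert_inl_inj, dvert_inl_ne_inr, Fin.ext_iff] at h <;> omega
    · -- pendant-bond
      have hgi := h1 i' (by simp [he'])
      have hne1 : (i : ℕ) ≠ (i' : ℕ) := by
        intro hval
        have hnone : g ↑i = none := by rw [hval]; exact hgi.1
        rw [hnone] at he
        cases he
      have hne2 : (i : ℕ) ≠ (i' : ℕ) + 1 := by
        intro hval
        have hnone : g ↑i = none := by rw [hval]; exact hgi.2
        rw [hnone] at he
        cases he
      rcases hv with rfl | rfl <;> rcases hv' with h | h <;>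
        simp only [dvert_inl_inj, dvert_inr_ne_inl, dvert_inl_ne_inr, Fin.ext_iff] at h <;> omega
    · -- pendant-pendant
      have hii : i ≠ i' := by
        intro hval
        subst hval
        rw [he] at he'
        exact hne (by rw [Option.some_inj.mp he'])
      rcases hv with rfl | rfl <;> rcases hv' with h | h
      · rw [dvert_inl_inj] at h; exact hii h
      · rw [dvert_inl_ne_inr] at h; exact h
      · rw [dvert_inr_ne_inl] at h; exact h
      · rw [dvert_inr_inj, Sigma.mk.inj_iff] at h; exact hii (h.1)

lemma dedge_bond_ne {i i' : Fin (n-1)} {j : Fin (b (↑i + 1))} {j' : Fin (b (↑i' + 1))}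
    (h : (i:ℕ) ≠ (i':ℕ)) : (Sum.inl ⟨i,j⟩ : DEdge n a b) ≠ Sum.inl ⟨i',j'⟩ := by
  intro h'
  injection h' with h1
  exact h (congrArg (fun q => (q.1 : ℕ)) h1)

lemma dedge_bond_ne' {i : Fin (n-1)} {j j' : Fin (b (↑i + 1))} (h : j ≠ j') :
    (Sum.inl ⟨i,j⟩ : DEdge n a b) ≠ Sum.inl ⟨i,j'⟩ := by
  intro h'
  injection h' with h1
  exact h (eq_of_heq (Sigma.mk.inj_iff.mp h1).2)

lemma dedge_bond_ne_pendant {i : Fin (n-1)} {j : Fin (b (↑i + 1))} {i' : Fin n}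
    {j' : Fin (a ↑i' - 1)} : (Sum.inl ⟨i,j⟩ : DEdge n a b) ≠ Sum.inr ⟨i',j'⟩ := by
  intro h; injection h

lemma dedge_pendant_ne' {i : Fin n} {j j' : Fin (a ↑i - 1)} (h : j ≠ j') :
    (Sum.inr ⟨i,j⟩ : DEdge n a b) ≠ Sum.inr ⟨i,j'⟩ := by
  intro h'
  injection h' with h1
  exact h (eq_of_heq (Sigma.mk.inj_iff.mp h1).2)

lemma mem_bond_left (i : Fin (n-1)) (j : Fin (b (↑i + 1))) (h : (i:ℕ) < n) :
    (Sum.inl ⟨i, h⟩ : DVert n a) ∈ Dends n a b (.inl ⟨i,j⟩) := Sym2.mem_mk_left _ _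

lemma mem_bond_right (i : Fin (n-1)) (j : Fin (b (↑i + 1))) (h : (i:ℕ)+1 < n) :
    (Sum.inl ⟨(i:ℕ)+1, h⟩ : DVert n a) ∈ Dends n a b (.inl ⟨i,j⟩) := Sym2.mem_mk_right _ _

lemma mem_pendant_left (i : Fin n) (j : Fin (a ↑i - 1)) :
    (Sum.inl i : DVert n a) ∈ Dends n a b (.inr ⟨i,j⟩) := Sym2.mem_mk_left _ _

lemma psi_inj : Function.Injective (Psi : Model a b n → Finset (DEdge n a b)) := by
  intro x y h
  apply Subtype.ext
  rw [Prod.ext_iff]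
  constructor
  · funext i
    by_cases hi : i < n - 1
    · refine Option.ext fun j => ?_
      constructor
      · intro hx
        have hm : Sum.inl ⟨⟨i, hi⟩, j⟩ ∈ Psi x := mem_Psi.mpr hx
        rw [h] at hm
        exact mem_Psi.mp hm
      · intro hy
        have hm : Sum.inl ⟨⟨i, hi⟩, j⟩ ∈ Psi y := mem_Psi.mpr hy
        rw [← h] at hm
        exact mem_Psi.mp hm
    · rw [x.2.1 i (by omega), y.2.1 i (by omega)]
  · funext i
    by_cases hi : i < n
    · refine Option.ext fun j => ?_
      constructor
      · intro hx
        have hm : Sum.inr ⟨⟨i, hi⟩, j⟩ ∈ Psi x := mem_Psi.mpr hx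
        rw [h] at hm
        exact mem_Psi.mp hm
      · intro hy
        have hm : Sum.inr ⟨⟨i, hi⟩, j⟩ ∈ Psi y := mem_Psi.mpr hy
        rw [← h] at hm
        exact mem_Psi.mp hm
    · rw [x.2.2.1 i (by omega), y.2.2.1 i (by omega)]

lemma psi_surj {s : Finset (DEdge n a b)} (hs : IsM s) : ∃ x : Model a b n, Psi x = s := by
  classical
  set F : ∀ i : ℕ, Option (Fin (b (i+1))) := fun i =>
    if h : i < n - 1 then
      (if h2 : ∃ j : Fin (b (i+1)), (Sum.inl ⟨⟨i, h⟩, j⟩ : DEdge n a b) ∈ s then some h2.choose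
       else none)
    else none with hF
  set G : ∀ i : ℕ, Option (Fin (a i - 1)) := fun i =>
    if h : i < n then
      (if h2 : ∃ j : Fin (a i - 1), (Sum.inr ⟨⟨i, h⟩, j⟩ : DEdge n a b) ∈ s then some h2.choose
       else none)
    else none with hG
  have hFmem : ∀ (i : ℕ) (hi : i < n - 1) (j : Fin (b (i+1))),
      F i = some j ↔ (Sum.inl ⟨⟨i, hi⟩, j⟩ : DEdge n a b) ∈ s := by
    intro i hi j
    rw [hF]
    simp only
    rw [dif_pos hi]
    constructor
    · intro hj
      by_cases h2 : ∃ j : Fin (b (i+1)), (Sum.inl ⟨⟨i, hi⟩, j⟩ : DEdge n a b) ∈ s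
      · rw [dif_pos h2] at hj
        obtain rfl : h2.choose = j := Option.some_inj.mp hj
        exact h2.choose_spec
      · rw [dif_neg h2] at hj
        cases hj
    · intro hj
      have h2 : ∃ j : Fin (b (i+1)), (Sum.inl ⟨⟨i, hi⟩, j⟩ : DEdge n a b) ∈ s := ⟨j, hj⟩
      rw [dif_pos h2]
      congr 1
      by_contra hne
      exact not_share hs h2.choose_spec hj (dedge_bond_ne' hne)
        (Sum.inl ⟨i, by omega⟩) (mem_bond_left _ _ _) (mem_bond_left _ _ _)
  have hGmem : ∀ (i : ℕ) (hi : i < n) (j : Fin (a i - 1)),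
      G i = some j ↔ (Sum.inr ⟨⟨i, hi⟩, j⟩ : DEdge n a b) ∈ s := by
    intro i hi j
    rw [hG]
    simp only
    rw [dif_pos hi]
    constructor
    · intro hj
      by_cases h2 : ∃ j : Fin (a i - 1), (Sum.inr ⟨⟨i, hi⟩, j⟩ : DEdge n a b) ∈ s
      · rw [dif_pos h2] at hj
        obtain rfl : h2.choose = j := Option.some_inj.mp hj
        exact h2.choose_spec
      · rw [dif_neg h2] at hj
        cases hj
    · intro hj
      have h2 : ∃ j : Fin (a i - 1), (Sum.inr ⟨⟨i, hi⟩, j⟩ : DEdge n a b) ∈ s := ⟨j, hj⟩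
      rw [dif_pos h2]
      congr 1
      by_contra hne
      exact not_share hs h2.choose_spec hj (dedge_pendant_ne' hne)
        (Sum.inl ⟨i, hi⟩) (mem_pendant_left _ _) (mem_pendant_left _ _)
  have hFsome : ∀ i : ℕ, (F i).isSome → i < n - 1 := by
    intro i hi
    by_contra hge
    rw [hF] at hi
    simp only [dif_neg hge] at hi
    simp at hi
  have hGsome : ∀ i : ℕ, (G i).isSome → i < n := by
    intro i hi
    by_contra hge
    rw [hG] at hi
    simp only [dif_neg hge] at hi
    simp at hi
  refine ⟨⟨(F, G), fun i hi => ?_, fun i hi => ?_, fun i hi => ?_, fun i hi => ?_⟩, ?_⟩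
  · -- F support
    exact Option.not_isSome_iff_eq_none.mp fun hsome => absurd (hFsome i hsome) (by omega)
  · exact Option.not_isSome_iff_eq_none.mp fun hsome => absurd (hGsome i hsome) (by omega)
  · -- cond1
    have hilt : i < n - 1 := hFsome i hi
    obtain ⟨j, hj⟩ := Option.isSome_iff_exists.mp hi
    have hbond : (Sum.inl ⟨⟨i, hilt⟩, j⟩ : DEdge n a b) ∈ s := (hFmem i hilt j).mp hj
    constructor
    · refine Option.not_isSome_iff_eq_none.mp fun hsome => ?_
      obtain ⟨j2, hj2⟩ := Option.isSome_iff_exists.mp hsome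
      have hin : i < n := by omega
      have hpend : (Sum.inr ⟨⟨i, hin⟩, j2⟩ : DEdge n a b) ∈ s := (hGmem i hin j2).mp hj2
      exact not_share hs hbond hpend dedge_bond_ne_pendant
        (Sum.inl ⟨i, hin⟩) (mem_bond_left _ _ _) (mem_pendant_left _ _)
    · refine Option.not_isSome_iff_eq_none.mp fun hsome => ?_
      obtain ⟨j2, hj2⟩ := Option.isSome_iff_exists.mp hsome
      have hin : i + 1 < n := by omega
      have hpend : (Sum.inr ⟨⟨i+1, hin⟩, j2⟩ : DEdge n a b) ∈ s := (hGmem (i+1) hin j2).mp hj2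
      exact not_share hs hbond hpend dedge_bond_ne_pendant
        (Sum.inl ⟨i+1, hin⟩) (mem_bond_right _ _ _) (mem_pendant_left _ _)
  · -- cond2
    obtain ⟨hi1, hi2⟩ := hi
    have hilt : i < n - 1 := hFsome i hi1
    have hilt2 : i + 1 < n - 1 := hFsome (i+1) hi2
    obtain ⟨j, hj⟩ := Option.isSome_iff_exists.mp hi1
    obtain ⟨j2, hj2⟩ := Option.isSome_iff_exists.mp hi2
    have hbond : (Sum.inl ⟨⟨i, hilt⟩, j⟩ : DEdge n a b) ∈ s := (hFmem i hilt j).mp hj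
    have hbond2 : (Sum.inl ⟨⟨i+1, hilt2⟩, j2⟩ : DEdge n a b) ∈ s := (hFmem (i+1) hilt2 j2).mp hj2
    exact not_share hs hbond hbond2 (dedge_bond_ne (show i ≠ i + 1 by omega))
      (Sum.inl ⟨i+1, by omega⟩) (mem_bond_right _ _ _) (mem_bond_left _ _ _)
  · -- Psi = s
    ext e
    refine mem_Psi.trans ?_
    rcases e with ⟨i, j⟩ | ⟨i, j⟩
    · show F ↑i = some j ↔ _
      exact hFmem ↑i i.2 j
    · show G ↑i = some j ↔ _
      exact hGmem ↑i i.2 j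

end GraphSec

lemma hosoya_eq_card_model (n : ℕ) (a b : ℕ → ℕ) :
    hosoyaM (Dends n a b) = Nat.card (Model a b n) := by
  have e : Model a b n ≃ {s : Finset (DEdge n a b) // IsM s} :=
    Equiv.ofBijective (fun x => ⟨Psi x, psi_isM x⟩)
      ⟨fun x y hxy => psi_inj (congrArg Subtype.val hxy),
       fun z => (psi_surj z.2).imp fun x hx => Subtype.ext hx⟩
  rw [show hosoyaM (Dends n a b) = Nat.card {s : Finset (DEdge n a b) // IsM s} from rfl]
  exact (Nat.card_congr e).symm


/-- The Hosoya index of the caterpillar-bond graph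
D_n(a_0,…,a_{n-1}; b_1,…,b_{n-1}) equals p_{n-1}, the numerator of the
generalized continued fraction a_0 + b_1/(a_1 + ⋯ + b_{n-1}/a_{n-1}). -/
theorem hosoya_caterpillar_bond (n : ℕ) (hn : 1 ≤ n) (a b : ℕ → ℕ)
    (ha : ∀ i, 1 ≤ a i) (hb : ∀ i, 1 ≤ b i)
    (p : ℕ → ℕ) (hp0 : p 0 = a 0) (hp1 : p 1 = a 0 * a 1 + b 1)
    (hp : ∀ k, p (k + 2) = a (k + 2) * p (k + 1) + b (k + 2) * p k) :
    hosoyaM (Dends n a b) = p (n - 1) := by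
  obtain ⟨m, rfl⟩ : ∃ m, n = m + 1 := ⟨n - 1, by omega⟩
  rw [hosoya_eq_card_model, card_model_succ a b ha p hp0 hp1 hp m]
  congr 1
end

section
/- The Hosoya index of the cyclic graph C_{n,a,b} (a cycle on n vertices where every edge is replaced by b parallel edges and each vertex carries a pendant leaves) equals the Hosoya index of the caterpillar-bond graph D_n(a+1, ..., a+1; 2b, b, ..., b), for all integers n ≥ 3, a ≥ 0, b ≥ 1. -/
/-- The endpoint map of the ring multigraph `C_{n,a,b}`: a cycle on `n` vertices
with every edge replaced by `b` parallel edges and `a` pendant leaves attached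
to each cycle vertex. -/
def Cends (n a b : ℕ) : (Fin n × Fin b) ⊕ (Fin n × Fin a) → Sym2 (Fin n ⊕ Fin n × Fin a)
  | .inl (i, _) => s(Sum.inl i, Sum.inl ⟨(i.1 + 1) % n, Nat.mod_lt _ i.pos⟩)
  | .inr (i, j) => s(Sum.inl i, Sum.inr (i, j))

/-!
Label the edges of `D` by those of `C_{n,a,b}`: bond `i < n - 1` of the ring is bond `i` of `D`,
and the closing bond between `n - 1` and `0` becomes the extra `b` copies of the first bond of `D`.
Then `D` is the ring with its closing bond moved from `{n - 1, 0}` onto `{0, 1}`, so both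
multigraphs have the same matchings avoiding that bond. A matching through the closing bond avoids
bond `n - 2` in the ring and the original first bond in `D`, and turning the cycle by one step,
`i ↦ i + 1`, while sending bond `n - 2` to bond `0`, matches the former matchings with the latter.
-/

section Matching

variable {V E V' E' : Type*}

def IsMatching (ends : E → Sym2 V) (s : Finset E) : Prop :=
  (∀ e ∈ s, ¬ (ends e).IsDiag) ∧ (s : Set E).Pairwise fun e f => ∀ v ∈ ends e, v ∉ ends f

theorem IsMatching.eq_of_mem {ends : E → Sym2 V} {s : Finset E} (hs : IsMatching ends s)
    {e f : E} (he : e ∈ s) (hf : f ∈ s) {v : V} (hve : v ∈ ends e) (hvf : v ∈ ends f) : e = f :=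
  by_contra fun hne => hs.2 he hf hne v hve hvf

theorem isMatching_map_iff {ends : E → Sym2 V} {ends' : E' → Sym2 V'} (φ : E ↪ E') (σ : V ↪ V')
    {s : Finset E} (h : ∀ e ∈ s, ends' (φ e) = (ends e).map σ) :
    IsMatching ends' (s.map φ) ↔ IsMatching ends s := by
  have disjoint_map (e f : E) :
      (∀ v ∈ (ends e).map σ, v ∉ (ends f).map σ) ↔ ∀ v ∈ ends e, v ∉ ends f := by
    simp only [Sym2.mem_map, forall_exists_index, and_imp, forall_apply_eq_imp_iff₂,
      σ.injective.eq_iff, exists_eq_right]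
  unfold IsMatching
  rw [Finset.coe_map, φ.injective.injOn.pairwise_image]
  refine and_congr ?_ (forall₂_congr fun e he => forall₂_congr fun f hf => ?_)
  · simp +contextual only [Finset.forall_mem_map, h, Sym2.isDiag_map σ.injective]
  · simp only [Function.onFun, h e he, h f hf, disjoint_map]

theorem isMatching_congr {ends₁ ends₂ : E → Sym2 V} {s : Finset E}
    (h : ∀ e ∈ s, ends₁ e = ends₂ e) : IsMatching ends₁ s ↔ IsMatching ends₂ s := by
  simpa using (isMatching_map_iff (ends := ends₁) (ends' := ends₂) (.refl E) (.refl V)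
    (by simpa using fun e he => (h e he).symm)).symm

theorem hosoyaM_congr {ends : E → Sym2 V} {ends' : E' → Sym2 V'} (φ : E ≃ E') (σ : V ↪ V')
    (h : ∀ e, ends' (φ e) = (ends e).map σ) : hosoyaM ends = hosoyaM ends' :=
  Nat.card_congr <| φ.finsetCongr.subtypeEquiv fun _ =>
    (isMatching_map_iff φ.toEmbedding σ fun e _ => h e).symm

theorem hosoyaM_eq_of_eqOn_compl {ends₁ ends₂ : E → Sym2 V} (B : Set E)
    (hB : Set.EqOn ends₁ ends₂ Bᶜ)
    (h : {s // IsMatching ends₁ s ∧ ∃ e ∈ s, e ∈ B} ≃ {s // IsMatching ends₂ s ∧ ∃ e ∈ s, e ∈ B}) :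
    hosoyaM ends₁ = hosoyaM ends₂ := by
  classical
  let split (ends : E → Sym2 V) : {s // IsMatching ends s} ≃
      {s // IsMatching ends s ∧ ∃ e ∈ s, e ∈ B} ⊕ {s // IsMatching ends s ∧ ¬ ∃ e ∈ s, e ∈ B} :=
    (Equiv.sumCompl fun s : {s // IsMatching ends s} => ∃ e ∈ s.1, e ∈ B).symm.trans
      (Equiv.sumCongr
        (Equiv.subtypeSubtypeEquivSubtypeInter (IsMatching ends) fun s => ∃ e ∈ s, e ∈ B)
        (Equiv.subtypeSubtypeEquivSubtypeInter (IsMatching ends) fun s => ¬ ∃ e ∈ s, e ∈ B))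
  have avoiding : {s // IsMatching ends₁ s ∧ ¬ ∃ e ∈ s, e ∈ B} ≃
      {s // IsMatching ends₂ s ∧ ¬ ∃ e ∈ s, e ∈ B} :=
    Equiv.subtypeEquivRight fun s => and_congr_left fun hs =>
      isMatching_congr fun e he => hB fun heB => hs ⟨e, he, heB⟩
  exact Nat.card_congr ((split ends₁).trans ((h.sumCongr avoiding).trans (split ends₂).symm))

end Matching

section Ring

abbrev CEdge (n a b : ℕ) : Type := (Fin n × Fin b) ⊕ (Fin n × Fin a)

abbrev CVert (n a : ℕ) : Type := Fin n ⊕ Fin n × Fin a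

variable {m a b : ℕ}

theorem Cends_inl (i : Fin (m + 2)) (j : Fin b) :
    Cends (m + 2) a b (.inl (i, j)) = s(.inl i, .inl (i + 1)) := by
  simp [Cends, Fin.ext_iff, Fin.val_add]

variable (m a b) in
/-- `D_{m+2}(a+1,…,a+1; 2b, b,…,b)` drawn on the vertex and edge labels of `C_{m+2,a,b}`. -/
def DendsOnRing : CEdge (m + 2) a b → Sym2 (CVert (m + 2) a)
  | .inl (i, _) => if i = Fin.last (m + 1) then s(.inl 0, .inl 1) else s(.inl i, .inl (i + 1))
  | .inr (i, j) => s(.inl i, .inr (i, j))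

variable (m a b) in
def closingBond : Set (CEdge (m + 2) a b) :=
  Set.range fun j => .inl (Fin.last (m + 1), j)

theorem DendsOnRing_eq_Cends {e : CEdge (m + 2) a b}
    (he : e ∉ closingBond m a b) : DendsOnRing m a b e = Cends (m + 2) a b e := by
  rcases e with ⟨i, j⟩ | ⟨i, j⟩
  · have hi : i ≠ Fin.last (m + 1) := fun hi => he ⟨j, by rw [hi]⟩
    simp [DendsOnRing, hi, Cends_inl]
  · rfl

variable (m a b) in
/-- The rotation `i ↦ i + 1` of the cycle, except that on bonds it is the cycle `(0 1 … m)`: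
it fixes the closing bond `m + 1` and sends bond `m` to bond `0`. -/
def rotateEdges : CEdge (m + 2) a b ≃ CEdge (m + 2) a b :=
  Equiv.sumCongr ((Fin.cycleRange (Fin.last m).castSucc).prodCongr (.refl _))
    ((Equiv.addRight 1).prodCongr (.refl _))

variable (m a) in
def rotateVertices : CVert (m + 2) a ≃ CVert (m + 2) a :=
  Equiv.sumCongr (Equiv.addRight 1) ((Equiv.addRight 1).prodCongr (.refl _))

theorem DendsOnRing_rotateEdges {e : CEdge (m + 2) a b}
    (he : ∀ j, e ≠ .inl ((Fin.last m).castSucc, j)) :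
    DendsOnRing m a b (rotateEdges m a b e) =
      (Cends (m + 2) a b e).map (rotateVertices m a) := by
  rcases e with ⟨i, j⟩ | ⟨i, j⟩
  · rcases lt_trichotomy i (Fin.last m).castSucc with hi | rfl | hi
    · have : i + 1 ≠ Fin.last (m + 1) := by
        simp only [Fin.lt_def, Fin.val_castSucc, Fin.val_last] at hi
        rw [Ne, Fin.ext_iff, Fin.val_add_one]
        split_ifs <;> simp only [Fin.val_last] <;> omega
      simp [rotateEdges, rotateVertices, DendsOnRing, Cends_inl, Fin.cycleRange_of_lt hi, this]
    · exact absurd rfl (he j)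
    · have : i = Fin.last (m + 1) := by
        simp only [Fin.lt_def, Fin.val_castSucc, Fin.val_last, Fin.ext_iff] at hi ⊢; omega
      subst this
      simp [rotateEdges, rotateVertices, DendsOnRing, Cends_inl, Fin.cycleRange_of_gt hi]
  · simp [rotateEdges, rotateVertices, DendsOnRing, Cends]

theorem rotateEdges_mem_closingBond_iff {e : CEdge (m + 2) a b} :
    rotateEdges m a b e ∈ closingBond m a b ↔ e ∈ closingBond m a b := by
  rcases e with ⟨i, j⟩ | ⟨i, j⟩
  · simp only [closingBond, rotateEdges, Set.mem_range, Equiv.sumCongr_apply, Sum.map_inl,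
      Equiv.prodCongr_apply, Prod.map, Equiv.refl_apply, Sum.inl.injEq, Prod.mk.injEq,
      exists_eq_right]
    conv_lhs => rw [← Fin.cycleRange_of_gt (Fin.castSucc_lt_last (Fin.last m))]
    exact (Fin.cycleRange _).injective.eq_iff
  · simp [closingBond, rotateEdges]

theorem rotateEdges_inl_penultimate (j : Fin b) :
    rotateEdges m a b (.inl ((Fin.last m).castSucc, j)) = .inl (0, j) := by
  simp [rotateEdges]

theorem inl_penultimate_notMem_of_isMatching_Cends {s : Finset _}
    (hs : IsMatching (Cends (m + 2) a b) s) (hB : ∃ e ∈ s, e ∈ closingBond m a b) (j : Fin b) :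
    .inl ((Fin.last m).castSucc, j) ∉ s := by
  obtain ⟨_, he, j', rfl⟩ := hB
  intro hj
  have := hs.eq_of_mem he hj (v := .inl (Fin.last (m + 1))) (by simp [Cends_inl])
    (by simp [Cends_inl, Fin.coeSucc_eq_succ])
  simp [Fin.ext_iff] at this

theorem inl_zero_notMem_of_isMatching_DendsOnRing {s : Finset _}
    (hs : IsMatching (DendsOnRing m a b) s) (hB : ∃ e ∈ s, e ∈ closingBond m a b) (j : Fin b) :
    .inl (0, j) ∉ s := by
  obtain ⟨_, he, j', rfl⟩ := hB
  intro hj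
  have := hs.eq_of_mem he hj (v := .inl 0) (by simp [DendsOnRing])
    (by simp [DendsOnRing])
  simp [Fin.ext_iff] at this

variable (m a b) in
def rotateMatchings :
    {s // IsMatching (Cends (m + 2) a b) s ∧ ∃ e ∈ s, e ∈ closingBond m a b} ≃
      {s // IsMatching (DendsOnRing m a b) s ∧ ∃ e ∈ s, e ∈ closingBond m a b} :=
  (rotateEdges m a b).finsetCongr.subtypeEquiv fun s => by
    have hmeet : (∃ e ∈ s, e ∈ closingBond m a b) ↔
        ∃ e ∈ (rotateEdges m a b).finsetCongr s, e ∈ closingBond m a b := by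
      simp only [Equiv.finsetCongr_apply, Finset.mem_map, Equiv.coe_toEmbedding]
      exact ⟨fun ⟨e, he, heB⟩ => ⟨_, ⟨e, he, rfl⟩, rotateEdges_mem_closingBond_iff.mpr heB⟩,
        fun ⟨_, ⟨e, he, rfl⟩, heB⟩ => ⟨e, he, rotateEdges_mem_closingBond_iff.mp heB⟩⟩
    have hcompat (hs : ∀ e ∈ s, ∀ j, e ≠ .inl ((Fin.last m).castSucc, j)) :=
      isMatching_map_iff (rotateEdges m a b).toEmbedding (rotateVertices m a).toEmbedding
        fun e he => DendsOnRing_rotateEdges (hs e he)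
    rw [← hmeet]
    refine ⟨fun ⟨hs, hB⟩ => ⟨?_, hB⟩, fun ⟨ht, hB⟩ => ⟨?_, hB⟩⟩
    · refine (hcompat ?_).mpr hs
      rintro e he j rfl
      exact inl_penultimate_notMem_of_isMatching_Cends hs hB j he
    · refine (hcompat ?_).mp ht
      rintro e he j rfl
      refine inl_zero_notMem_of_isMatching_DendsOnRing ht (hmeet.mp hB) j ?_
      simpa [rotateEdges_inl_penultimate] using
        Finset.mem_map_of_mem (rotateEdges m a b).toEmbedding he

theorem hosoyaM_Cends_eq_hosoyaM_DendsOnRing :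
    hosoyaM (Cends (m + 2) a b) = hosoyaM (DendsOnRing m a b) :=
  hosoyaM_eq_of_eqOn_compl (closingBond m a b) (fun _ he => (DendsOnRing_eq_Cends he).symm)
    (rotateMatchings m a b)

variable (m a b) in
def caterpillarEdgeEquiv : CEdge (m + 2) a b ≃
    DEdge (m + 2) (fun _ => a + 1) (fun i => if i = 1 then 2 * b else b) where
  toFun
    | .inl (i, j) =>
      if hi : i = Fin.last (m + 1) then
        .inl ⟨⟨0, by omega⟩, ⟨b + j, by simp only [zero_add, ↓reduceIte]; omega⟩⟩
      else .inl ⟨⟨i, by have := Fin.val_lt_last hi; omega⟩, ⟨j, by dsimp only; split_ifs <;> omega⟩⟩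
    | .inr (i, j) => .inr ⟨i, j⟩
  invFun
    | .inl ⟨i, k⟩ =>
      if hk : b ≤ k then
        .inl (Fin.last (m + 1),
          ⟨k - b, by have := k.2; dsimp only at this; split_ifs at this <;> omega⟩)
      else .inl (⟨i, by omega⟩, ⟨k, by omega⟩)
    | .inr ⟨i, j⟩ => .inr (i, j)
  left_inv := by
    rintro (⟨i, j⟩ | ⟨i, j⟩)
    · by_cases hi : i = Fin.last (m + 1) <;> simp [hi]
    · rfl
  right_inv := by
    rintro (⟨⟨_ | i, hi⟩, ⟨k, hk⟩⟩ | ⟨i, j⟩)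
    · by_cases hbk : b ≤ k
      · simp only [hbk, ↓reduceDIte, Nat.add_one_sub_one, Nat.add_eq_right, Fin.val_eq_zero_iff,
          Fin.zero_eta, Fin.coe_ofNat_eq_mod, Nat.zero_mod, Nat.reduceAdd, ↓dreduceIte,
          add_tsub_cancel_of_le]
        rfl
      · simp only [hbk, ↓reduceDIte, Fin.zero_eta, Fin.zero_eq_last_iff, Nat.add_eq_zero_iff,
          one_ne_zero, and_false]
        rfl
    · have hkb : ¬ b ≤ k := by
        simp only [Nat.add_eq_right, Nat.add_eq_zero_iff, one_ne_zero, and_false, ↓reduceIte] at hk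
        omega
      have hi' : (⟨i + 1, by omega⟩ : Fin (m + 2)) ≠ Fin.last (m + 1) := by
        simp only [ne_eq, Fin.ext_iff, Fin.val_last, Nat.add_right_cancel_iff]; omega
      simp only [hkb, hi', ↓reduceDIte]
      rfl
    · rfl

variable (m a) in
def caterpillarVertexEquiv : CVert (m + 2) a ≃ DVert (m + 2) (fun _ => a + 1) :=
  Equiv.sumCongr (.refl _) (Equiv.sigmaEquivProd _ _).symm

theorem Dends_caterpillarEdgeEquiv (e : CEdge (m + 2) a b) :
    Dends (m + 2) (fun _ => a + 1) (fun i => if i = 1 then 2 * b else b)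
        (caterpillarEdgeEquiv m a b e) =
      (DendsOnRing m a b e).map (caterpillarVertexEquiv m a) := by
  rcases e with ⟨i, j⟩ | ⟨i, j⟩
  · by_cases hi : i = Fin.last (m + 1)
    · simp only [caterpillarEdgeEquiv, Equiv.coe_fn_mk, hi, ↓reduceDIte, Dends, DendsOnRing,
        ↓reduceIte, Sym2.map_mk]
      rfl
    · have : i + 1 = ⟨i + 1, by have := Fin.val_lt_last hi; omega⟩ :=
        Fin.ext (Fin.val_add_one_of_lt (Fin.lt_last_iff_ne_last.mpr hi))
      simp only [caterpillarEdgeEquiv, Equiv.coe_fn_mk, hi, ↓reduceDIte, Dends, DendsOnRing,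
        ↓reduceIte, Sym2.map_mk, this]
      rfl
  · rfl

theorem hosoyaM_DendsOnRing_eq_hosoyaM_Dends :
    hosoyaM (DendsOnRing m a b) =
      hosoyaM (Dends (m + 2) (fun _ => a + 1) (fun i => if i = 1 then 2 * b else b)) :=
  hosoyaM_congr (caterpillarEdgeEquiv m a b) (caterpillarVertexEquiv m a).toEmbedding
    Dends_caterpillarEdgeEquiv

end Ring

theorem hosoya_ring_eq_caterpillar_bond_general (n a b : ℕ) (hn : 3 ≤ n) :
    hosoyaM (Cends n a b) =
      hosoyaM (Dends n (fun _ => a + 1) (fun i => if i = 1 then 2 * b else b)) := by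
  obtain ⟨m, rfl⟩ : ∃ m, n = m + 2 := ⟨n - 2, by omega⟩
  exact hosoyaM_Cends_eq_hosoyaM_DendsOnRing.trans hosoyaM_DendsOnRing_eq_hosoyaM_Dends

/-- `Z(C_{n,a,b}) = Z(D_n(a+1,…,a+1; 2b, b,…,b))` for `n ≥ 3`, `a ≥ 0`, `b ≥ 1`. -/
theorem hosoya_ring_eq_caterpillar_bond (n a b : ℕ) (hn : 3 ≤ n) (hb : 1 ≤ b) :
    hosoyaM (Cends n a b) =
      hosoyaM (Dends n (fun _ => a + 1) (fun i => if i = 1 then 2 * b else b)) :=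
  hosoya_ring_eq_caterpillar_bond_general n a b hn
end
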